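/- Suppose X_F ⊆ X_S. Let x̃ ∈ Λ_{η_x} and x ∈ ℝⁿ with ‖x̃ − x‖ ≤ ε, let (ũ,m) ∈ C̃(x̃), and set x_p = φ(x,ũ,p) for p ∈ {1,…,m}. Then: (i) x_p ∈ X_S for every p ∈ {1,…,m}; and (ii) there exists a grid point x̃⁺ ∈ G̃(x̃,ũ,m) with ‖x̃⁺ − x_m‖ ≤ ε (any grid point of Λ_{η_x} nearest to x_m works), and consequently ℒ(x̃⁺) < ℒ(x̃). (This is the one-round controller-refinement step established in the proof of Theorem 1.) -/

import Mathlib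

/-- The Euclidean state space ℝⁿ. -/
abbrev Euc (n : ℕ) := EuclideanSpace ℝ (Fin n)

/-- `phi f x u m` is the state reached from `x` by applying the input `u`
constantly for `m` time steps, i.e. the `m`-fold iterate of `y ↦ f y u` at `x`. -/
def phi {n nu : ℕ} (f : Euc n → Euc nu → Euc n) (x : Euc n) (u : Euc nu) (m : ℕ) : Euc n :=
  (fun y => f y u)^[m] x

/-- The grid `Λ_η ⊆ ℝⁿ`: points whose coordinates are integer multiples of `2η/√n`. -/
def grid (n : ℕ) (η : ℝ) : Set (Euc n) :=
  { y | ∀ i : Fin n, ∃ a : ℤ, y i = (2 * η / Real.sqrt n) * (a : ℝ) }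

/-- Symbolic transition map: `G̃(x̃,ũ,m) = { x̃⁺ ∈ Λ_{η_x} : ‖x̃⁺ − φ(x̃,ũ,m)‖ ≤ Lᵐ ε + η_x }`. -/
def Gt {n nu : ℕ} (f : Euc n → Euc nu → Euc n) (L ε ηx : ℝ)
    (xt : Euc n) (ut : Euc nu) (m : ℕ) : Set (Euc n) :=
  { x' | x' ∈ grid n ηx ∧ ‖x' - phi f xt ut m‖ ≤ L ^ m * ε + ηx }

/-- `Int_ε(A)`: points of `A` whose closed `ε`-ball is contained in `A`. -/
def IntEps {n : ℕ} (ε : ℝ) (A : Set (Euc n)) : Set (Euc n) :=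
  { x ∈ A | Metric.closedBall x ε ⊆ A }

/-- The predecessor map `Pre(P)` of the reachability game. -/
def Pre {n nu : ℕ} (f : Euc n → Euc nu → Euc n) (L ε ηx : ℝ)
    (Ut : Set (Euc nu)) (Mmax : ℕ) (XtS : Set (Euc n)) (P : Set (Euc n)) : Set (Euc n) :=
  { xt ∈ XtS | ∃ ut ∈ Ut, ∃ m : ℕ, 1 ≤ m ∧ m ≤ Mmax ∧
      Gt f L ε ηx xt ut m ⊆ P ∧ ∀ p : ℕ, 1 ≤ p → p ≤ m → Gt f L ε ηx xt ut p ⊆ XtS }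

/-- The iteration `P⁽⁰⁾ = X̃_F`, `P⁽ⁿ⁺¹⁾ = P⁽ⁿ⁾ ∪ Pre(P⁽ⁿ⁾)` of Algorithm 1. -/
def Pseq {n nu : ℕ} (f : Euc n → Euc nu → Euc n) (L ε ηx : ℝ)
    (Ut : Set (Euc nu)) (Mmax : ℕ) (XtS XtF : Set (Euc n)) : ℕ → Set (Euc n)
  | 0 => XtF
  | k + 1 => Pseq f L ε ηx Ut Mmax XtS XtF k ∪
      Pre f L ε ηx Ut Mmax XtS (Pseq f L ε ηx Ut Mmax XtS XtF k)

/-- The rank `ℒ(x̃) ∈ ℕ ∪ {∞}` : the least `k` with `x̃ ∈ P⁽ᵏ⁾` (and `∞` if there is none). -/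
noncomputable def rankL {n nu : ℕ} (f : Euc n → Euc nu → Euc n) (L ε ηx : ℝ)
    (Ut : Set (Euc nu)) (Mmax : ℕ) (XtS XtF : Set (Euc n)) (xt : Euc n) : ℕ∞ :=
  sInf ((fun k : ℕ => (k : ℕ∞)) '' { k : ℕ | xt ∈ Pseq f L ε ηx Ut Mmax XtS XtF k })

/-- The symbolic controller `C̃`. -/
def Ct {n nu : ℕ} (f : Euc n → Euc nu → Euc n) (L ε ηx : ℝ)
    (Ut : Set (Euc nu)) (Mmax : ℕ) (XtS XtF : Set (Euc n)) (xt : Euc n) :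
    Set (Euc nu × ℕ) :=
  { um | um.1 ∈ Ut ∧ 1 ≤ um.2 ∧ um.2 ≤ Mmax ∧
      (∀ x' ∈ Gt f L ε ηx xt um.1 um.2,
        rankL f L ε ηx Ut Mmax XtS XtF x' < rankL f L ε ηx Ut Mmax XtS XtF xt) ∧
      ∀ p : ℕ, 1 ≤ p → p ≤ um.2 → Gt f L ε ηx xt um.1 p ⊆ XtS }

/-!
The grid point `x̃⁺` nearest to `x_p = φ(x,ũ,p)` is within `η_x ≤ ε` of `x_p`, and since the
trajectories from `x` and `x̃` stay within `Lᵖ ε` of each other, it is within `Lᵖ ε + η_x` of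
`φ(x̃,ũ,p)`, i.e. `x̃⁺ ∈ G̃(x̃,ũ,p)`. The controller makes every such point lie in `Int_ε(X_S)`,
whose `ε`-balls contain `x_p`, and for `p = m` have smaller rank.
-/

lemma abs_mul_round_div_sub_le {h : ℝ} (hh : 0 < h) (t : ℝ) :
    |h * round (t / h) - t| ≤ h / 2 := by
  have hround : |t / h - round (t / h)| ≤ 1 / 2 := abs_sub_round (t / h)
  calc |h * round (t / h) - t| = h * |t / h - round (t / h)| := by
        rw [← abs_of_pos hh, ← abs_mul, abs_sub_comm, abs_of_pos hh, mul_sub,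
          mul_div_cancel₀ t hh.ne']
    _ ≤ h * (1 / 2) := by gcongr
    _ = h / 2 := by ring

lemma EuclideanSpace.norm_le_sqrt_card_mul {n : ℕ} {c : ℝ} (hc : 0 ≤ c)
    (v : EuclideanSpace ℝ (Fin n)) (hv : ∀ i, |v i| ≤ c) : ‖v‖ ≤ √n * c := by
  have hsum : ∑ i, ‖v i‖ ^ 2 ≤ n * c ^ 2 := by
    calc ∑ i, ‖v i‖ ^ 2 ≤ ∑ _i : Fin n, c ^ 2 :=
          Finset.sum_le_sum fun i _ => pow_le_pow_left₀ (norm_nonneg _) (hv i) 2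
      _ = n * c ^ 2 := by simp
  calc ‖v‖ = √(∑ i, ‖v i‖ ^ 2) := EuclideanSpace.norm_eq v
    _ ≤ √(n * c ^ 2) := Real.sqrt_le_sqrt hsum
    _ = √n * c := by rw [Real.sqrt_mul (Nat.cast_nonneg n), Real.sqrt_sq hc]

lemma exists_mem_grid_norm_sub_le {n : ℕ} {η : ℝ} (hη : 0 < η) (z : Euc n) :
    ∃ g ∈ grid n η, ‖g - z‖ ≤ η := by
  rcases Nat.eq_zero_or_pos n with rfl | hn
  · exact ⟨z, fun i => i.elim0, by simpa using hη.le⟩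
  have hsqrt : 0 < √(n : ℝ) := Real.sqrt_pos.mpr (by exact_mod_cast hn)
  set h := 2 * η / √(n : ℝ)
  have hh : 0 < h := by positivity
  let g : Euc n := WithLp.toLp 2 fun i => h * round (z i / h)
  refine ⟨g, fun i => ⟨round (z i / h), rfl⟩, ?_⟩
  calc ‖g - z‖ ≤ √n * (h / 2) :=
        EuclideanSpace.norm_le_sqrt_card_mul (by positivity) _
          fun i => abs_mul_round_div_sub_le hh (z i)
    _ = η := by simp only [h]; field_simp

lemma norm_phi_sub_le {n nu : ℕ} {f : Euc n → Euc nu → Euc n} {u : Euc nu} {L : ℝ}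
    (hL : 0 ≤ L) (hf : ∀ x₁ x₂ : Euc n, ‖f x₁ u - f x₂ u‖ ≤ L * ‖x₁ - x₂‖)
    (x₁ x₂ : Euc n) (p : ℕ) :
    ‖phi f x₁ u p - phi f x₂ u p‖ ≤ L ^ p * ‖x₁ - x₂‖ := by
  have hlip : LipschitzWith L.toNNReal fun y => f y u :=
    LipschitzWith.of_dist_le_mul fun x₁ x₂ => by
      rw [dist_eq_norm, dist_eq_norm, Real.coe_toNNReal L hL]; exact hf x₁ x₂
  have hiter := (hlip.iterate p).dist_le_mul x₁ x₂
  rwa [dist_eq_norm, dist_eq_norm, NNReal.coe_pow, Real.coe_toNNReal L hL] at hiter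

lemma mem_Gt_of_norm_sub_phi_le {n nu : ℕ} {f : Euc n → Euc nu → Euc n} {u : Euc nu}
    {L ε ηx : ℝ} (hL : 0 ≤ L) (hf : ∀ x₁ x₂ : Euc n, ‖f x₁ u - f x₂ u‖ ≤ L * ‖x₁ - x₂‖)
    {xt x g : Euc n} (hclose : ‖xt - x‖ ≤ ε) (p : ℕ) (hg : g ∈ grid n ηx)
    (hgx : ‖g - phi f x u p‖ ≤ ηx) : g ∈ Gt f L ε ηx xt u p := by
  refine ⟨hg, ?_⟩
  have htraj : ‖phi f x u p - phi f xt u p‖ ≤ L ^ p * ε := by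
    calc ‖phi f x u p - phi f xt u p‖ ≤ L ^ p * ‖x - xt‖ := norm_phi_sub_le hL hf x xt p
      _ ≤ L ^ p * ε := by rw [norm_sub_rev] at hclose; gcongr
  calc ‖g - phi f xt u p‖ ≤ ‖g - phi f x u p‖ + ‖phi f x u p - phi f xt u p‖ :=
        norm_sub_le_norm_sub_add_norm_sub _ _ _
    _ ≤ L ^ p * ε + ηx := by linarith

lemma mem_of_mem_IntEps {n : ℕ} {ε : ℝ} {A : Set (Euc n)} {g y : Euc n}
    (hg : g ∈ IntEps ε A) (hy : ‖y - g‖ ≤ ε) : y ∈ A :=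
  hg.2 (by rwa [Metric.mem_closedBall, dist_eq_norm])

theorem refinement_step_general {n nu : ℕ}
    (U : Set (Euc nu)) (f : Euc n → Euc nu → Euc n) (L : ℝ) (hL : 0 ≤ L)
    (hf : ∀ x₁ x₂ : Euc n, ∀ u ∈ U, ‖f x₁ u - f x₂ u‖ ≤ L * ‖x₁ - x₂‖)
    (ηx ηu : ℝ) (hηx : 0 < ηx)
    (ε : ℝ) (hε : ηx ≤ ε) (Mmax : ℕ)
    (XS : Set (Euc n))
    (Ut : Set (Euc nu)) (hUt : Ut = grid nu ηu ∩ U)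
    (XtS : Set (Euc n)) (hXtS : XtS = grid n ηx ∩ IntEps ε XS)
    (XtF : Set (Euc n))
    (xt : Euc n)
    (x : Euc n) (hclose : ‖xt - x‖ ≤ ε)
    (ut : Euc nu) (m : ℕ) (hum : (ut, m) ∈ Ct f L ε ηx Ut Mmax XtS XtF xt) :
    -- (i) the real trajectory stays in the safety set
    (∀ p : ℕ, 1 ≤ p → p ≤ m → phi f x ut p ∈ XS) ∧
    -- (ii) there is a successor grid point `ε`-close to `x_m`, whose rank has decreased
    (∃ xtp ∈ Gt f L ε ηx xt ut m, ‖xtp - phi f x ut m‖ ≤ ε ∧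
      rankL f L ε ηx Ut Mmax XtS XtF xtp < rankL f L ε ηx Ut Mmax XtS XtF xt) := by
  obtain ⟨hut, -, -, hrank, hsafe⟩ := hum
  have hfu := fun x₁ x₂ => hf x₁ x₂ ut (hUt ▸ hut).2
  have successor : ∀ p, ∃ g ∈ Gt f L ε ηx xt ut p, ‖g - phi f x ut p‖ ≤ ε := fun p => by
    obtain ⟨g, hg, hgx⟩ := exists_mem_grid_norm_sub_le hηx (phi f x ut p)
    exact ⟨g, mem_Gt_of_norm_sub_phi_le hL hfu hclose p hg hgx, hgx.trans hε⟩
  refine ⟨fun p hp1 hpm => ?_, ?_⟩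
  · obtain ⟨g, hgG, hgx⟩ := successor p
    have hgS : g ∈ grid n ηx ∩ IntEps ε XS := hXtS ▸ hsafe p hp1 hpm hgG
    exact mem_of_mem_IntEps hgS.2 (by rwa [norm_sub_rev])
  · obtain ⟨g, hgG, hgx⟩ := successor m
    exact ⟨g, hgG, hgx, hrank g hgG⟩

/-- One-round controller-refinement step (from the proof of Theorem 1): if
`‖x̃ − x‖ ≤ ε` with `x̃ ∈ Λ_{η_x}` and `(ũ,m) ∈ C̃(x̃)`, and `x_p = φ(x,ũ,p)`, then
(i) `x_p ∈ X_S` for all `p ∈ {1,…,m}`, and (ii) there is `x̃⁺ ∈ G̃(x̃,ũ,m)` with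
`‖x̃⁺ − x_m‖ ≤ ε`, and consequently `ℒ(x̃⁺) < ℒ(x̃)`. -/
theorem refinement_step {n nu : ℕ} (hn : 1 ≤ n)
    (U : Set (Euc nu)) (f : Euc n → Euc nu → Euc n) (L : ℝ) (hL : 0 ≤ L)
    (hf : ∀ x₁ x₂ : Euc n, ∀ u ∈ U, ‖f x₁ u - f x₂ u‖ ≤ L * ‖x₁ - x₂‖)
    (ηx ηu : ℝ) (hηx : 0 < ηx) (hηu : 0 < ηu)
    (ε : ℝ) (hε : ηx ≤ ε) (Mmax : ℕ) (hM : 1 ≤ Mmax)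
    (XS XF : Set (Euc n)) (hFS : XF ⊆ XS)
    (Ut : Set (Euc nu)) (hUt : Ut = grid nu ηu ∩ U)
    (XtS : Set (Euc n)) (hXtS : XtS = grid n ηx ∩ IntEps ε XS)
    (XtF : Set (Euc n)) (hXtF : XtF = grid n ηx ∩ IntEps ε XF)
    (xt : Euc n) (hxt : xt ∈ grid n ηx)
    (x : Euc n) (hclose : ‖xt - x‖ ≤ ε)
    (ut : Euc nu) (m : ℕ) (hum : (ut, m) ∈ Ct f L ε ηx Ut Mmax XtS XtF xt) :
    -- (i) the real trajectory stays in the safety set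
    (∀ p : ℕ, 1 ≤ p → p ≤ m → phi f x ut p ∈ XS) ∧
    -- (ii) there is a successor grid point `ε`-close to `x_m`, whose rank has decreased
    (∃ xtp ∈ Gt f L ε ηx xt ut m, ‖xtp - phi f x ut m‖ ≤ ε ∧
      rankL f L ε ηx Ut Mmax XtS XtF xtp < rankL f L ε ηx Ut Mmax XtS XtF xt) :=
  refinement_step_general U f L hL hf ηx ηu hηx ε hε Mmax XS Ut hUt XtS hXtS XtF xt x hclose ut m
    hum
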